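/- arXiv:math/0412349 — 3 statements merged into one kernel-verified Lean document; each statement's English description precedes it below -/
import Mathlib

section
/- A random probability measure P=(P_A)_{A∈ℬ} is neutral to the right if and only if for every B₁,B₂∈𝒜(u) with B₁⊆B₂, the random variable V_{B₁B₂} is independent of the σ-field ℱ_{B₁}:=σ(P_A : A∈𝒜, A⊆B₁). -/
/-!
(⇐) For a chain `B₀ ⊆ ⋯ ⊆ B_k` in `𝒜(u)`, inclusion–exclusion over the members of `𝒜` below
`B_i` shows that `P_{B_i}`, and hence the `i`-th variable `V_{B_{i-1}B_i}` of the chain, agrees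
a.s. with an `ℱ_{B_i}`-measurable function. Since `V_{B_iB_{i+1}}` is independent of `ℱ_{B_i}`,
the variables of the chain are independent: peel off the last one.

(⇒) `ℱ_{B₁}` is the directed union of the σ-fields generated by finitely many `P_A`, `A ∈ 𝒜`,
`A ⊆ B₁`. Close such a family under intersections and remove maximal members one at a time; the
unions of what is left form a chain `E₀ ⊆ ⋯ ⊆ E_M ⊆ B₁` from which every `P_C` is recovered by
`P_C = P_{E_j} - P_{E_{j-1}} + P_{E_{j-1} ∩ C}`. Along `E₀ ⊆ ⋯ ⊆ E_M ⊆ B₁ ⊆ B₂` the identity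
`P_{E_{j+1}} = P_{E_j} + V_{E_jE_{j+1}} (1 - P_{E_j})` expresses each `P_{E_j}` through the earlier
variables of the chain, and neutrality makes the last one, `V_{B₁B₂}`, independent of all of them.
-/

open MeasureTheory ProbabilityTheory Set
open scoped ENNReal Classical BigOperators

/-- The collection of finite unions of members of `S`. -/
def finUnions {𝒳 : Type*} (S : Set (Set 𝒳)) : Set (Set 𝒳) :=
  {B | ∃ T : Finset (Set 𝒳), ↑T ⊆ S ∧ B = ⋃₀ ↑T}

/-- An indexing collection on a topological space `𝒳`: a family of closed sets generating the
Borel σ-field, containing `∅` and `univ`, closed under arbitrary intersections, any two nonempty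
members intersecting, and admitting a sequence of finite sub-semilattices approximating every
member from outside. -/
structure IndexingCollection (𝒳 : Type*) [TopologicalSpace 𝒳] [MeasurableSpace 𝒳] : Type _ where
  sets : Set (Set 𝒳)
  isClosed' : ∀ A ∈ sets, IsClosed A
  generates : MeasurableSpace.generateFrom sets = ‹MeasurableSpace 𝒳›
  empty_mem : ∅ ∈ sets
  univ_mem : Set.univ ∈ sets
  sInter_mem : ∀ S ⊆ sets, S.Nonempty → ⋂₀ S ∈ sets
  inter_nonempty : ∀ A ∈ sets, ∀ B ∈ sets, A.Nonempty → B.Nonempty → (A ∩ B).Nonempty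
  approx : ∃ An : ℕ → Set (Set 𝒳),
    (∀ n, An n ⊆ sets ∧ (An n).Finite ∧ ∀ A ∈ An n, ∀ B ∈ An n, A ∩ B ∈ An n) ∧
    ∀ A ∈ sets, ∃ Bn : ℕ → Set 𝒳,
      (∀ n, Bn n ∈ finUnions (An n)) ∧ A = ⋂ n, Bn n ∧ ∀ n, A ⊆ interior (Bn n)

variable {𝒳 Ω : Type*} [TopologicalSpace 𝒳] [MeasurableSpace 𝒳] [BorelSpace 𝒳]
  [MeasurableSpace Ω]

/-- `P = (P_A)_{A ∈ ℬ}` is a random probability measure: the `P_A` are `[0,1]`-valued random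
variables, finitely additive in distribution, with `P_𝒳 = 1` a.s. and countably additive in
distribution. -/
structure IsRPM (Pr : Measure Ω) (P : Set 𝒳 → Ω → ℝ) : Prop where
  meas : ∀ A : Set 𝒳, MeasurableSet A → Measurable (P A)
  mem_Icc : ∀ A : Set 𝒳, MeasurableSet A → ∀ ω, P A ω ∈ Set.Icc (0:ℝ) 1
  finAdd : ∀ (k m : ℕ) (A : ℕ → Set 𝒳), (∀ j, MeasurableSet (A j)) →
    (∀ i j, i < k → j < k → i ≠ j → Disjoint (A i) (A j)) →
    ∀ c : Fin (m+1) → ℕ, Monotone c → c 0 = 0 → c (Fin.last m) = k →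
      Measure.map (fun ω (l : Fin m) =>
          P (⋃ j ∈ Finset.Ico (c l.castSucc) (c l.succ), A j) ω) Pr
        = Measure.map (fun ω (l : Fin m) =>
            ∑ j ∈ Finset.Ico (c l.castSucc) (c l.succ), P (A j) ω) Pr
  univ_one : ∀ᵐ ω ∂Pr, P Set.univ ω = 1
  ctsAdd : ∀ A : ℕ → Set 𝒳, (∀ n, MeasurableSet (A n)) → Antitone A → (⋂ n, A n) = ∅ →
    ∀ᵐ ω ∂Pr, Filter.Tendsto (fun n => P (A n) ω) Filter.atTop (nhds 0)

/-- The σ-field `ℱ_{B}` generated by `P_A`, `A ∈ 𝒜`, `A ⊆ B`. -/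
def sigmaF (I : IndexingCollection 𝒳) (P : Set 𝒳 → Ω → ℝ) (B : Set 𝒳) : MeasurableSpace Ω :=
  ⨆ (A : Set 𝒳) (_ : A ∈ I.sets ∧ A ⊆ B), MeasurableSpace.comap (P A) inferInstance

/-- The σ-field generated by the whole process `P`. -/
def sigmaP (P : Set 𝒳 → Ω → ℝ) : MeasurableSpace Ω :=
  ⨆ (A : Set 𝒳) (_ : MeasurableSet A), MeasurableSpace.comap (P A) inferInstance

/-- `Q` is a transition system: each `Q_{B₁B₂}` (for `B₁ ⊆ B₂` in `𝒜(u)`) is a transition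
probability on `[0,1]` and the Chapman–Kolmogorov equations hold. -/
def IsTransitionSystem (I : IndexingCollection 𝒳)
    (Q : Set 𝒳 → Set 𝒳 → Kernel ℝ ℝ) : Prop :=
  (∀ B₁ B₂, B₁ ∈ finUnions I.sets → B₂ ∈ finUnions I.sets → B₁ ⊆ B₂ →
      ∀ z ∈ Set.Icc (0:ℝ) 1, Q B₁ B₂ z (Set.Icc (0:ℝ) 1) = 1) ∧
  ∀ B₁ B₂ B₃, B₁ ∈ finUnions I.sets → B₂ ∈ finUnions I.sets → B₃ ∈ finUnions I.sets →
    B₁ ⊆ B₂ → B₂ ⊆ B₃ → ∀ z₁ ∈ Set.Icc (0:ℝ) 1, ∀ Γ : Set ℝ, MeasurableSet Γ →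
      Q B₁ B₃ z₁ Γ = ∫⁻ z₂ in Set.Icc (0:ℝ) 1, Q B₂ B₃ z₂ Γ ∂(Q B₁ B₂ z₁)

/-- `P` is `𝒬`-Markov: for all `B₁ ⊆ B₂` in `𝒜(u)`,
`Pr[P_{B₂} ∈ Γ₂ | ℱ_{B₁}] = Q_{B₁B₂}(P_{B₁}; Γ₂)` a.s. -/
def IsQMarkov (I : IndexingCollection 𝒳) (Pr : Measure Ω) (P : Set 𝒳 → Ω → ℝ)
    (Q : Set 𝒳 → Set 𝒳 → Kernel ℝ ℝ) : Prop :=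
  ∀ B₁ B₂, B₁ ∈ finUnions I.sets → B₂ ∈ finUnions I.sets → B₁ ⊆ B₂ →
    ∀ Γ : Set ℝ, MeasurableSet Γ →
      Pr[Set.indicator {ω | P B₂ ω ∈ Γ} (fun _ => (1:ℝ)) | sigmaF I P B₁]
        =ᵐ[Pr] fun ω => (Q B₁ B₂ (P B₁ ω) Γ).toReal

/-- `X₁, …, X_n` is a sample from `P`:
`Pr[X₁ ∈ A₁, …, X_n ∈ A_n | P] = ∏ᵢ P_{Aᵢ}` a.s. -/
def IsSample (Pr : Measure Ω) (P : Set 𝒳 → Ω → ℝ) {n : ℕ} (X : Fin n → Ω → 𝒳) : Prop :=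
  (∀ i, Measurable (X i)) ∧
  ∀ A : Fin n → Set 𝒳, (∀ i, MeasurableSet (A i)) →
    Pr[Set.indicator {ω | ∀ i, X i ω ∈ A i} (fun _ => (1:ℝ)) | sigmaP P]
      =ᵐ[Pr] fun ω => ∏ i, P (A i) ω

/-- `V_{B₁B₂} = (P_{B₂} - P_{B₁})/(1 - P_{B₁})` on `{P_{B₁} < 1}`, and `1` elsewhere. -/
noncomputable def Vr (P : Set 𝒳 → Ω → ℝ) (B₁ B₂ : Set 𝒳) (ω : Ω) : ℝ :=
  if P B₁ ω < 1 then (P B₂ ω - P B₁ ω) / (1 - P B₁ ω) else 1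

/-- `P` is neutral to the right: for every chain `B₀ ⊆ … ⊆ B_k` in `𝒜(u)` the random variables
`P_{B₀}, V_{B₀B₁}, …, V_{B_{k-1}B_k}` are independent. -/
def IsNTR (I : IndexingCollection 𝒳) (Pr : Measure Ω) (P : Set 𝒳 → Ω → ℝ) : Prop :=
  ∀ (k : ℕ) (B : Fin (k+1) → Set 𝒳), (∀ i, B i ∈ finUnions I.sets) →
    (∀ i j, i ≤ j → B i ⊆ B j) →
    iIndepFun
      (fun i : Fin (k+1) => Fin.cases (motive := fun _ => Ω → ℝ) (P (B 0))
        (fun i' : Fin k => Vr P (B i'.castSucc) (B i'.succ)) i) Pr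

/-- A family `(F_{B₁B₂})` of laws on `[0,1]` is a neutral to the right system. -/
def IsNTRSystem (I : IndexingCollection 𝒳) (F : Set 𝒳 → Set 𝒳 → Measure ℝ) : Prop :=
  ∀ B₁ B₂ B₃, B₁ ∈ finUnions I.sets → B₂ ∈ finUnions I.sets → B₃ ∈ finUnions I.sets →
    B₁ ⊆ B₂ → B₂ ⊆ B₃ → ∀ Γ : Set ℝ, MeasurableSet Γ →
      F B₁ B₃ Γ = ∫⁻ y in Set.Icc (0:ℝ) 1, ∫⁻ z in Set.Icc (0:ℝ) 1,
        Γ.indicator (fun _ => (1:ℝ≥0∞)) (y + z - y * z) ∂(F B₂ B₃) ∂(F B₁ B₂)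

theorem Fin.monotone_snoc {α : Type*} [Preorder α] {n : ℕ} {f : Fin n → α} {a : α}
    (hf : Monotone f) (ha : ∀ i, f i ≤ a) : Monotone (Fin.snoc f a : Fin (n + 1) → α) := by
  intro i j hij
  induction j using Fin.lastCases with
  | last => induction i using Fin.lastCases <;> simp [ha]
  | cast j =>
    induction i using Fin.lastCases with
    | last => exact absurd hij (not_le.2 (Fin.castSucc_lt_last j))
    | cast i => simpa using hf (Fin.castSucc_le_castSucc_iff.1 hij)

section finUnions

variable {α : Type*}

theorem finUnions_mono {S T : Set (Set α)} (h : S ⊆ T) : finUnions S ⊆ finUnions T :=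
  fun _ ⟨U, hU, hB⟩ => ⟨U, hU.trans h, hB⟩

theorem subset_sUnion_of_mem_finUnions {S : Set (Set α)} {B : Set α} (hB : B ∈ finUnions S) :
    B ⊆ ⋃₀ S := by
  obtain ⟨T, hT, rfl⟩ := hB
  exact sUnion_mono hT

theorem MeasurableSet.of_mem_finUnions [MeasurableSpace α] {S : Set (Set α)} {B : Set α}
    (hS : ∀ A ∈ S, MeasurableSet A) (hB : B ∈ finUnions S) : MeasurableSet B := by
  obtain ⟨T, hT, rfl⟩ := hB
  exact T.finite_toSet.measurableSet_sUnion fun A hA => hS A (hT hA)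

theorem sUnion_image_inter [DecidableEq (Set α)] (T : Finset (Set α)) (C : Set α) :
    ⋃₀ ↑(T.image (· ∩ C)) = ⋃₀ ↑T ∩ C := by
  rw [Finset.coe_image, sUnion_image, sUnion_eq_biUnion, iUnion₂_inter]

end finUnions

namespace ProbabilityTheory

variable {Ω : Type*} {mΩ : MeasurableSpace Ω} {μ : Measure Ω}

theorem Indep.comap_congr {β : Type*} [MeasurableSpace β] {m₁ : MeasurableSpace Ω}
    {f g : Ω → β} (h : Indep m₁ (MeasurableSpace.comap f inferInstance) μ) (hfg : f =ᵐ[μ] g) :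
    Indep m₁ (MeasurableSpace.comap g inferInstance) μ := by
  rw [Indep_iff] at h ⊢
  rintro t₁ _ ht₁ ⟨s, hs, rfl⟩
  have hpre : (g ⁻¹' s : Set Ω) =ᵐ[μ] (f ⁻¹' s : Set Ω) := hfg.symm.preimage s
  rw [measure_congr ((Filter.EventuallyEq.refl _ t₁).inter hpre), measure_congr hpre,
    h t₁ _ ht₁ ⟨s, hs, rfl⟩]

theorem Indep.biSup_comap_of_aestronglyMeasurable {m₁ m₂ : MeasurableSpace Ω}
    (h : Indep m₁ m₂ μ) {ι : Type*} (s : Finset ι) {f : ι → Ω → ℝ}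
    (hf : ∀ i ∈ s, AEStronglyMeasurable[m₂] (f i) μ) :
    Indep m₁ (⨆ i ∈ s, MeasurableSpace.comap (f i) inferInstance) μ := by
  set F : Ω → s → ℝ := fun ω i => f i ω
  set G : Ω → s → ℝ := fun ω i => (hf i i.2).mk _ ω
  have hG : Measurable[m₂] G :=
    measurable_pi_lambda _ fun i => (hf i i.2).stronglyMeasurable_mk.measurable
  have hFG : G =ᵐ[μ] F := by
    filter_upwards [ae_all_iff.2 fun i : s => (hf i i.2).ae_eq_mk] with ω hω
    funext i
    exact (hω i).symm
  refine indep_of_indep_of_le_right ((indep_of_indep_of_le_right h hG.comap_le).comap_congr hFG)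
    (iSup₂_le fun i hi => ?_)
  exact ((measurable_pi_apply (⟨i, hi⟩ : s)).comp (comap_measurable F)).comap_le

theorem indep_biSup_of_forall_finset [IsZeroOrProbabilityMeasure μ] {ι : Type*}
    {m₁ : MeasurableSpace Ω} {m : ι → MeasurableSpace Ω} {S : Set ι} (hm₁ : m₁ ≤ mΩ)
    (hm : ∀ i ∈ S, m i ≤ mΩ) (h : ∀ s : Finset ι, ↑s ⊆ S → Indep m₁ (⨆ i ∈ s, m i) μ) :
    Indep m₁ (⨆ i ∈ S, m i) μ := by
  classical
  have hsup : (⨆ s : {s : Finset ι // ↑s ⊆ S}, ⨆ i ∈ s.1, m i) = ⨆ i ∈ S, m i :=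
    le_antisymm (iSup_le fun s => iSup₂_le fun i hi => le_iSup₂_of_le i (s.2 hi) le_rfl)
      (iSup₂_le fun i hi => le_iSup_of_le (⟨{i}, by simpa using hi⟩ : {s : Finset ι // ↑s ⊆ S})
        (le_iSup₂_of_le (f := fun j (_ : j ∈ ({i} : Finset ι)) => m j) i
          (Finset.mem_singleton_self i) le_rfl))
  rw [← hsup]
  refine (indep_iSup_of_directed_le (m := fun s : {s : Finset ι // ↑s ⊆ S} => ⨆ i ∈ s.1, m i)
    (fun s => (h s.1 s.2).symm) (fun s => iSup₂_le fun i hi => hm i (s.2 hi)) hm₁ ?_).symm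
  intro s t
  refine ⟨⟨s.1 ∪ t.1, by simpa using And.intro s.2 t.2⟩, ?_, ?_⟩ <;>
    exact biSup_mono fun i hi => by simp [hi]

theorem iIndepFun_of_indep_succ [IsProbabilityMeasure μ] {k : ℕ}
    {F : Fin (k + 1) → MeasurableSpace Ω} (hF : Monotone F) {X : Fin (k + 1) → Ω → ℝ}
    (hX : ∀ i, AEStronglyMeasurable[F i] (X i) μ)
    (hindep : ∀ j : Fin k,
      Indep (MeasurableSpace.comap (X j.succ) inferInstance) (F j.castSucc) μ) :
    iIndepFun X μ := by
  classical
  set Y := fun i => (hX i).mk (X i)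
  have hY : ∀ i, Measurable[F i] (Y i) := fun i => (hX i).stronglyMeasurable_mk.measurable
  have hXY : ∀ i, X i =ᵐ[μ] Y i := fun i => (hX i).ae_eq_mk
  have hindepY : ∀ j : Fin k,
      Indep (MeasurableSpace.comap (Y j.succ) inferInstance) (F j.castSucc) μ :=
    fun j => ((hindep j).symm.comap_congr (hXY j.succ)).symm
  rw [iIndepFun_congr hXY, iIndepFun_iff_measure_inter_preimage_eq_mul]
  intro S
  induction S using Finset.induction_on_max with
  | empty => simp
  | insert a S hlt ih =>
    intro sets hsets
    have hsetsS := fun i hi => hsets i (Finset.mem_insert_of_mem hi)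
    rw [Finset.set_biInter_insert, Finset.prod_insert fun ha => lt_irrefl a (hlt a ha),
      ← ih hsetsS]
    rcases S.eq_empty_or_nonempty with rfl | ⟨b, hb⟩
    · simp
    obtain ⟨j, rfl⟩ := Fin.exists_succ_eq.2 (ne_of_gt ((Fin.zero_le b).trans_lt (hlt b hb)))
    refine (Indep_iff _ _ _).1 (hindepY j) _ _
      ⟨sets j.succ, hsets _ (Finset.mem_insert_self _ _), rfl⟩ ?_
    exact Finset.measurableSet_biInter _ fun i hi =>
      hF (Fin.le_castSucc_iff.2 (hlt i hi)) _ (hY i (hsetsS i hi))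

end ProbabilityTheory

section sigmaF

variable {𝒳 Ω : Type*} [TopologicalSpace 𝒳] [MeasurableSpace 𝒳]
  {I : IndexingCollection 𝒳} {P : Set 𝒳 → Ω → ℝ}

theorem IndexingCollection.measurableSet {A : Set 𝒳} (hA : A ∈ I.sets) : MeasurableSet A :=
  I.generates ▸ MeasurableSpace.measurableSet_generateFrom hA

theorem IndexingCollection.infClosed_sets_subset (I : IndexingCollection 𝒳) (B : Set 𝒳) :
    InfClosed {A | A ∈ I.sets ∧ A ⊆ B} := fun A hA C hC =>
  ⟨by simpa using I.sInter_mem {A, C} (pair_subset hA.1 hC.1) (insert_nonempty _ _),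
    inter_subset_left.trans hA.2⟩

theorem comap_le_sigmaF {A B : Set 𝒳} (hA : A ∈ I.sets) (hAB : A ⊆ B) :
    MeasurableSpace.comap (P A) inferInstance ≤ sigmaF I P B :=
  le_iSup₂_of_le A ⟨hA, hAB⟩ le_rfl

theorem sigmaF_mono {B B' : Set 𝒳} (hB : B ⊆ B') : sigmaF I P B ≤ sigmaF I P B' :=
  iSup₂_le fun _ hA => comap_le_sigmaF hA.1 (hA.2.trans hB)

end sigmaF

namespace IsRPM

variable {𝒳 Ω : Type*} [MeasurableSpace 𝒳] {mΩ : MeasurableSpace Ω} {Pr : Measure Ω}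
  {P : Set 𝒳 → Ω → ℝ}

theorem ae_sum_eq_one (hP : IsRPM Pr P) {k : ℕ} {A : ℕ → Set 𝒳} (hA : ∀ j, MeasurableSet (A j))
    (hdisj : ∀ i j, i < k → j < k → i ≠ j → Disjoint (A i) (A j))
    (hcover : ⋃ j ∈ Finset.range k, A j = univ) :
    ∀ᵐ ω ∂Pr, ∑ j ∈ Finset.range k, P (A j) ω = 1 := by
  have hc : Monotone ![0, k] := Fin.monotone_iff_le_succ.2 fun i => by
    fin_cases i; simp
  -- finite additivity only equates laws; since `P univ = 1` a.s., the law of the sum is `δ₁`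
  have hlaw := congrArg (Measure.map fun x : Fin 1 → ℝ => x 0)
    (hP.finAdd k 1 A hA hdisj ![0, k] hc rfl rfl)
  rw [Measure.map_map (measurable_pi_apply 0)
      (measurable_pi_lambda _ fun _ => hP.meas _ (Finset.measurableSet_biUnion _ fun j _ => hA j)),
    Measure.map_map (measurable_pi_apply 0)
      (measurable_pi_lambda _ fun _ => Finset.measurable_sum _ fun j _ => hP.meas _ (hA j))] at hlaw
  simp only [Function.comp_def, Matrix.cons_val_zero, Fin.castSucc_zero, Fin.succ_zero_eq_one,
    Matrix.cons_val_one, ← Finset.range_eq_Ico, hcover] at hlaw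
  have hmeas1 : MeasurableSet {x : ℝ | x = 1} := measurableSet_eq
  have h1 : ∀ᵐ x ∂(Pr.map (P univ)), x = 1 :=
    (ae_map_iff (hP.meas _ .univ).aemeasurable hmeas1).2 hP.univ_one
  rw [hlaw] at h1
  exact (ae_map_iff (Finset.measurable_sum _ fun j _ => hP.meas _ (hA j)).aemeasurable
    hmeas1).1 h1

theorem ae_add_add_eq_one (hP : IsRPM Pr P) {A B C : Set 𝒳} (hA : MeasurableSet A)
    (hB : MeasurableSet B) (hC : MeasurableSet C) (hAB : Disjoint A B) (hAC : Disjoint A C)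
    (hBC : Disjoint B C) (hcover : A ∪ B ∪ C = univ) :
    ∀ᵐ ω ∂Pr, P A ω + P B ω + P C ω = 1 := by
  have h := hP.ae_sum_eq_one (k := 3) (A := fun j => if h : j < 3 then ![A, B, C] ⟨j, h⟩ else ∅)
    (fun j => by split_ifs with h <;> [interval_cases j <;> simpa; exact .empty])
    (fun i j hi hj hij => by
      interval_cases i <;> interval_cases j <;> simp_all [disjoint_comm])
    (by simpa [show Finset.range 3 = {0, 1, 2} from rfl, union_assoc] using hcover)
  simpa [Finset.sum_range_succ] using h

theorem ae_empty_eq_zero (hP : IsRPM Pr P) : ∀ᵐ ω ∂Pr, P ∅ ω = 0 := by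
  filter_upwards [hP.ae_add_add_eq_one .univ .empty .empty (disjoint_empty _) (disjoint_empty _)
    (disjoint_empty _) (by simp), hP.univ_one] with ω h h₁
  linarith

theorem ae_add_compl_eq_one (hP : IsRPM Pr P) {A : Set 𝒳} (hA : MeasurableSet A) :
    ∀ᵐ ω ∂Pr, P A ω + P Aᶜ ω = 1 := by
  filter_upwards [hP.ae_add_add_eq_one hA hA.compl .empty disjoint_compl_right (disjoint_empty _)
    (disjoint_empty _) (by simp), hP.ae_empty_eq_zero] with ω h h₀
  linarith

theorem ae_eq_add_diff (hP : IsRPM Pr P) {A B : Set 𝒳} (hA : MeasurableSet A)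
    (hB : MeasurableSet B) (hAB : A ⊆ B) :
    ∀ᵐ ω ∂Pr, P B ω = P A ω + P (B \ A) ω := by
  filter_upwards [hP.ae_add_add_eq_one hA (hB.diff hA) hB.compl disjoint_sdiff_right
    (disjoint_compl_right.mono_right (compl_subset_compl.2 hAB))
    (disjoint_compl_right.mono_left sdiff_subset) (by simp [union_sdiff_cancel hAB]),
    hP.ae_add_compl_eq_one hB] with ω h hB'
  linarith

theorem ae_le_of_subset (hP : IsRPM Pr P) {A B : Set 𝒳} (hA : MeasurableSet A)
    (hB : MeasurableSet B) (hAB : A ⊆ B) : ∀ᵐ ω ∂Pr, P A ω ≤ P B ω := by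
  filter_upwards [hP.ae_eq_add_diff hA hB hAB] with ω h
  linarith [(hP.mem_Icc _ (hB.diff hA) ω).1]

theorem ae_union_add_inter (hP : IsRPM Pr P) {A B : Set 𝒳} (hA : MeasurableSet A)
    (hB : MeasurableSet B) : ∀ᵐ ω ∂Pr, P (A ∪ B) ω + P (A ∩ B) ω = P A ω + P B ω := by
  filter_upwards [hP.ae_eq_add_diff hA (hA.union hB) subset_union_left,
    hP.ae_eq_add_diff (hA.inter hB) hB inter_subset_right] with ω h₁ h₂
  rw [union_sdiff_left] at h₁
  rw [sdiff_inter_self_eq_sdiff] at h₂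
  linarith

theorem ae_eq_add_Vr_mul (hP : IsRPM Pr P) {B₁ B₂ : Set 𝒳} (h₁ : MeasurableSet B₁)
    (h₂ : MeasurableSet B₂) (hB : B₁ ⊆ B₂) :
    ∀ᵐ ω ∂Pr, P B₂ ω = P B₁ ω + Vr P B₁ B₂ ω * (1 - P B₁ ω) := by
  filter_upwards [hP.ae_le_of_subset h₁ h₂ hB] with ω hle
  rw [Vr]
  split_ifs with hlt
  · field_simp [(sub_pos.2 hlt).ne']
    ring
  · linarith [(hP.mem_Icc _ h₁ ω).2, (hP.mem_Icc _ h₂ ω).2]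

theorem aestronglyMeasurable_sUnion (hP : IsRPM Pr P) {m : MeasurableSpace Ω}
    {𝒮 : Set (Set 𝒳)} (h𝒮 : ∀ A ∈ 𝒮, MeasurableSet A) (hinf : InfClosed 𝒮)
    (hP𝒮 : ∀ A ∈ 𝒮, AEStronglyMeasurable[m] (P A) Pr) {T : Finset (Set 𝒳)} (hT : ↑T ⊆ 𝒮) :
    AEStronglyMeasurable[m] (P (⋃₀ ↑T)) Pr := by
  classical
  induction hn : T.card using Nat.strong_induction_on generalizing T with
  | _ n ih =>
  rcases T.eq_empty_or_nonempty with rfl | ⟨A, hA⟩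
  · refine (aestronglyMeasurable_const (b := (0 : ℝ))).congr ?_
    filter_upwards [hP.ae_empty_eq_zero] with ω h
    simp [h]
  set T' := T.erase A
  have hT' : ↑T' ⊆ 𝒮 := (Finset.coe_subset.2 (T.erase_subset A)).trans hT
  have hcard : T'.card < n := hn ▸ Finset.card_erase_lt_of_mem hA
  have himg : ↑(T'.image (· ∩ A)) ⊆ 𝒮 := by
    intro D hD
    obtain ⟨C, hC, rfl⟩ := Finset.mem_image.1 hD
    exact hinf (hT' hC) (hT hA)
  have hsplit : ⋃₀ (↑T : Set (Set 𝒳)) = ⋃₀ ↑T' ∪ A := by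
    rw [← Finset.insert_erase hA, Finset.coe_insert, sUnion_insert, union_comm]
  have hU := ih _ hcard hT' rfl
  have hUA := ih _ (Finset.card_image_le.trans_lt hcard) himg rfl
  rw [sUnion_image_inter] at hUA
  refine ((hU.add (hP𝒮 A (hT hA))).sub hUA).congr ?_
  filter_upwards [hP.ae_union_add_inter
    (T'.finite_toSet.measurableSet_sUnion fun C hC => h𝒮 C (hT' hC)) (h𝒮 A (hT hA))] with ω h
  rw [hsplit]
  simp only [Pi.add_apply, Pi.sub_apply]
  linarith

/-- The quantification over `m` expresses that each `P C` is a.s. a measurable function of the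
`P (E i)`. -/
theorem exists_chain_determining (hP : IsRPM Pr P) (𝒞 : Finset (Set 𝒳))
    (h𝒞 : ∀ C ∈ 𝒞, MeasurableSet C) (hinf : InfClosed (𝒞 : Set (Set 𝒳))) :
    ∃ (M : ℕ) (E : Fin (M + 1) → Set 𝒳), Monotone E ∧ (∀ i, E i ∈ finUnions ↑𝒞) ∧
      ∀ m : MeasurableSpace Ω, (∀ i, AEStronglyMeasurable[m] (P (E i)) Pr) →
        ∀ C ∈ 𝒞, AEStronglyMeasurable[m] (P C) Pr := by
  classical
  induction 𝒞 using Finset.strongInduction with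
  | H 𝒞 ih =>
  rcases 𝒞.eq_empty_or_nonempty with rfl | hne
  · exact ⟨0, fun _ => ∅, monotone_const, fun _ => ⟨∅, by simp, by simp⟩, by simp⟩
  obtain ⟨Cm, hCm, hmax⟩ := 𝒞.finite_toSet.exists_maximal hne
  set 𝒞' := 𝒞.erase Cm
  have hsub : 𝒞' ⊆ 𝒞 := Finset.erase_subset Cm 𝒞
  have hmem : ∀ C ∈ 𝒞', C ∈ 𝒞 := fun C hC => hsub hC
  have hne : ∀ C ∈ 𝒞', ∀ D, C ∩ D ≠ Cm := fun C hC D h => (Finset.mem_erase.1 hC).1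
    (le_antisymm (hmax (hmem C hC) (h ▸ inter_subset_left)) (h ▸ inter_subset_left))
  have hinf_Cm : ∀ C ∈ 𝒞', C ∩ Cm ∈ 𝒞' := fun C hC =>
    Finset.mem_erase.2 ⟨hne C hC Cm, hinf (hmem C hC) hCm⟩
  have hinf' : InfClosed (𝒞' : Set (Set 𝒳)) := fun C hC D hD =>
    Finset.mem_erase.2 ⟨hne C hC D, hinf (hmem C hC) (hmem D hD)⟩
  obtain ⟨M, E, hEmono, hEmem, hdet⟩ :=
    ih 𝒞' (Finset.erase_ssubset hCm) (fun C hC => h𝒞 C (hmem C hC)) hinf'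
  refine ⟨M + 1, Fin.snoc E (⋃₀ ↑𝒞), Fin.monotone_snoc hEmono fun i =>
    (subset_sUnion_of_mem_finUnions (hEmem i)).trans (sUnion_mono (Finset.coe_subset.2 hsub)),
    ?_, ?_⟩
  · intro i
    induction i using Fin.lastCases with
    | last => simpa using ⟨𝒞, subset_rfl, rfl⟩
    | cast i => simpa using finUnions_mono (Finset.coe_subset.2 hsub) (hEmem i)
  intro m hm C hC
  have hdet' := hdet m fun i => by simpa using hm i.castSucc
  by_cases hCCm : C = Cm
  swap
  · exact hdet' C (Finset.mem_erase.2 ⟨hCCm, hC⟩)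
  subst hCCm
  have h𝒞' : ∀ D ∈ (𝒞' : Set (Set 𝒳)), MeasurableSet D := fun D hD => h𝒞 D (hmem D hD)
  have hU' := hP.aestronglyMeasurable_sUnion h𝒞' hinf' hdet' subset_rfl
  -- by maximality of `C`, `⋃₀ 𝒞' ∩ C` is a union of members of `𝒞'`
  have hU'C : AEStronglyMeasurable[m] (P (⋃₀ ↑𝒞' ∩ C)) Pr := by
    rw [← sUnion_image_inter]
    refine hP.aestronglyMeasurable_sUnion h𝒞' hinf' hdet' ?_
    intro D' hD'
    obtain ⟨D, hD, rfl⟩ := Finset.mem_image.1 hD'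
    exact hinf_Cm D hD
  have hU : AEStronglyMeasurable[m] (P (⋃₀ ↑𝒞)) Pr := by simpa using hm (Fin.last _)
  refine ((hU.sub hU').add hU'C).congr ?_
  have hsplit : ⋃₀ (↑𝒞 : Set (Set 𝒳)) = ⋃₀ ↑𝒞' ∪ C := by
    rw [← Finset.insert_erase hC, Finset.coe_insert, sUnion_insert, union_comm]
  filter_upwards [hP.ae_union_add_inter (𝒞'.finite_toSet.measurableSet_sUnion h𝒞')
    (h𝒞 C hC)] with ω h
  rw [hsplit]
  simp only [Pi.add_apply, Pi.sub_apply]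
  linarith

end IsRPM

section ntrVars

variable {𝒳 Ω : Type*} {P : Set 𝒳 → Ω → ℝ}

noncomputable def ntrVars (P : Set 𝒳 → Ω → ℝ) {k : ℕ} (B : Fin (k + 1) → Set 𝒳) :
    Fin (k + 1) → Ω → ℝ :=
  Fin.cases (P (B 0)) fun i => Vr P (B i.castSucc) (B i.succ)

theorem measurable_Vr_formula :
    Measurable fun x : ℝ × ℝ => if x.1 < 1 then (x.2 - x.1) / (1 - x.1) else 1 :=
  Measurable.ite (measurableSet_lt measurable_fst measurable_const)
    ((measurable_snd.sub measurable_fst).div (measurable_const.sub measurable_fst))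
    measurable_const

theorem measurable_Vr {m : MeasurableSpace Ω} {B₁ B₂ : Set 𝒳} (h₁ : Measurable[m] (P B₁))
    (h₂ : Measurable[m] (P B₂)) : Measurable[m] (Vr P B₁ B₂) :=
  measurable_Vr_formula.comp (h₁.prodMk h₂)

theorem aestronglyMeasurable_Vr {m m₀ : MeasurableSpace Ω} {μ : Measure[m₀] Ω}
    {B₁ B₂ : Set 𝒳} (h₁ : AEStronglyMeasurable[m] (P B₁) μ)
    (h₂ : AEStronglyMeasurable[m] (P B₂) μ) :
    AEStronglyMeasurable[m] (Vr P B₁ B₂) μ := by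
  refine ⟨_, (measurable_Vr_formula.comp (h₁.stronglyMeasurable_mk.measurable.prodMk
    h₂.stronglyMeasurable_mk.measurable)).stronglyMeasurable, ?_⟩
  filter_upwards [h₁.ae_eq_mk, h₂.ae_eq_mk] with ω e₁ e₂
  simp [Vr, e₁, e₂]

theorem measurable_ntrVars [MeasurableSpace Ω] {k : ℕ} {B : Fin (k + 1) → Set 𝒳}
    (hB : ∀ i, Measurable (P (B i))) (i : Fin (k + 1)) : Measurable (ntrVars P B i) := by
  induction i using Fin.cases with
  | zero => exact hB 0
  | succ i => exact measurable_Vr (hB _) (hB _)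

theorem aestronglyMeasurable_ntrVars {m₀ : MeasurableSpace Ω} {μ : Measure[m₀] Ω} {k : ℕ}
    {B : Fin (k + 1) → Set 𝒳} {F : Fin (k + 1) → MeasurableSpace Ω} (hF : Monotone F)
    (hB : ∀ i, AEStronglyMeasurable[F i] (P (B i)) μ) (i : Fin (k + 1)) :
    AEStronglyMeasurable[F i] (ntrVars P B i) μ := by
  induction i using Fin.cases with
  | zero => exact hB 0
  | succ i => exact aestronglyMeasurable_Vr ((hB _).mono (hF (Fin.castSucc_le_succ i))) (hB _)

theorem IsRPM.aestronglyMeasurable_iSup_ntrVars [MeasurableSpace 𝒳] {mΩ : MeasurableSpace Ω}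
    {Pr : Measure Ω} (hP : IsRPM Pr P) {k : ℕ} {B : Fin (k + 1) → Set 𝒳}
    (hB : ∀ i, MeasurableSet (B i)) (hmono : Monotone B) (i : Fin (k + 1)) :
    AEStronglyMeasurable[⨆ j ≤ i, MeasurableSpace.comap (ntrVars P B j) inferInstance]
      (P (B i)) Pr := by
  induction i using Fin.induction with
  | zero =>
    have h0 : MeasurableSpace.comap (ntrVars P B 0) inferInstance ≤
        ⨆ j ≤ (0 : Fin (k + 1)), MeasurableSpace.comap (ntrVars P B j) inferInstance :=
      le_iSup₂_of_le (f := fun j (_ : j ≤ 0) =>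
        MeasurableSpace.comap (ntrVars P B j) inferInstance) 0 le_rfl le_rfl
    exact ((comap_measurable (ntrVars P B 0)).mono h0 le_rfl).aestronglyMeasurable
  | succ i ih =>
    have hle : (⨆ j ≤ i.castSucc, MeasurableSpace.comap (ntrVars P B j) inferInstance) ≤
        ⨆ j ≤ i.succ, MeasurableSpace.comap (ntrVars P B j) inferInstance :=
      biSup_mono fun j hj => hj.trans (Fin.castSucc_le_succ i)
    have hV := ((comap_measurable (ntrVars P B i.succ)).mono
      (le_iSup₂_of_le (f := fun j (_ : j ≤ i.succ) =>
        MeasurableSpace.comap (ntrVars P B j) inferInstance) i.succ le_rfl le_rfl)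
      le_rfl).aestronglyMeasurable (μ := Pr)
    refine ((ih.mono hle).add
      (hV.mul ((aestronglyMeasurable_const (b := (1 : ℝ))).sub (ih.mono hle)))).congr ?_
    filter_upwards [hP.ae_eq_add_Vr_mul (hB _) (hB _) (hmono (Fin.castSucc_le_succ i))] with ω h
    exact h.symm

end ntrVars

section NeutralToTheRight

variable {𝒳 Ω : Type*} [TopologicalSpace 𝒳] [MeasurableSpace 𝒳] {mΩ : MeasurableSpace Ω}
  {I : IndexingCollection 𝒳} {Pr : Measure Ω} {P : Set 𝒳 → Ω → ℝ}

theorem IsRPM.aestronglyMeasurable_sigmaF (hP : IsRPM Pr P) {B : Set 𝒳}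
    (hB : B ∈ finUnions I.sets) : AEStronglyMeasurable[sigmaF I P B] (P B) Pr := by
  obtain ⟨T, hT, rfl⟩ := hB
  exact hP.aestronglyMeasurable_sUnion (fun A hA => I.measurableSet hA.1)
    (I.infClosed_sets_subset _)
    (fun A hA => (measurable_iff_comap_le.2 (comap_le_sigmaF hA.1 hA.2)).aestronglyMeasurable)
    fun A hA => ⟨hT hA, subset_sUnion_of_mem hA⟩

theorem IsRPM.exists_indep_Vr_of_isNTR (hP : IsRPM Pr P) (hntr : IsNTR I Pr P)
    {B₁ B₂ : Set 𝒳} (hB₁ : B₁ ∈ finUnions I.sets) (hB₂ : B₂ ∈ finUnions I.sets) (hB : B₁ ⊆ B₂)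
    {M : ℕ} {E : Fin (M + 1) → Set 𝒳} (hEmono : Monotone E)
    (hEmem : ∀ i, E i ∈ finUnions I.sets) (hE : ∀ i, E i ⊆ B₁) :
    ∃ m : MeasurableSpace Ω, Indep (MeasurableSpace.comap (Vr P B₁ B₂) inferInstance) m Pr ∧
      ∀ i, AEStronglyMeasurable[m] (P (E i)) Pr := by
  set C : Fin (M + 3) → Set 𝒳 := Fin.snoc (Fin.snoc E B₁) B₂
  have hCmono : Monotone C := by
    refine Fin.monotone_snoc (Fin.monotone_snoc hEmono hE) fun i => ?_
    induction i using Fin.lastCases <;> simp [hB, (hE _).trans hB]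
  have hCmem : ∀ i, C i ∈ finUnions I.sets := by
    intro i
    induction i using Fin.lastCases with
    | last => simpa [C] using hB₂
    | cast i => induction i using Fin.lastCases <;> simp [C, hB₁, hEmem]
  have hCmeas : ∀ i, MeasurableSet (C i) :=
    fun i => .of_mem_finUnions (fun _ => I.measurableSet) (hCmem i)
  have hind : iIndepFun (ntrVars P C) Pr := hntr (M + 2) C hCmem fun i j hij => hCmono hij
  refine ⟨⨆ j ∈ ({Fin.last (M + 2)}ᶜ : Set (Fin (M + 3))),
    MeasurableSpace.comap (ntrVars P C j) inferInstance, ?_, fun i => ?_⟩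
  · have hlast : ntrVars P C (Fin.last (M + 2)) = Vr P B₁ B₂ := by
      change ntrVars P C (Fin.last (M + 1)).succ = _
      rw [ntrVars, Fin.cases_succ]
      simp [C]
    have := indep_biSup_compl
      (fun j => (measurable_ntrVars (fun i => hP.meas _ (hCmeas i)) j).comap_le) hind.iIndep
      {Fin.last (M + 2)}
    simpa [hlast] using this
  · have := hP.aestronglyMeasurable_iSup_ntrVars hCmeas hCmono i.castSucc.castSucc
    simp only [C, Fin.snoc_castSucc] at this
    exact this.mono (biSup_mono fun j hj => ne_of_lt (hj.trans_lt (Fin.castSucc_lt_last _)))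

theorem IsRPM.indep_Vr_sigmaF_of_isNTR [IsProbabilityMeasure Pr] (hP : IsRPM Pr P)
    (hntr : IsNTR I Pr P) {B₁ B₂ : Set 𝒳} (hB₁ : B₁ ∈ finUnions I.sets)
    (hB₂ : B₂ ∈ finUnions I.sets) (hB : B₁ ⊆ B₂) :
    Indep (MeasurableSpace.comap (Vr P B₁ B₂) inferInstance) (sigmaF I P B₁) Pr := by
  have hmeas : ∀ {B}, B ∈ finUnions I.sets → MeasurableSet B :=
    .of_mem_finUnions fun _ => I.measurableSet
  refine indep_biSup_of_forall_finset
    (measurable_Vr (hP.meas _ (hmeas hB₁)) (hP.meas _ (hmeas hB₂))).comap_le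
    (fun A hA => (hP.meas A (I.measurableSet hA.1)).comap_le) fun Fst hFst => ?_
  have hfin : (infClosure (Fst : Set (Set 𝒳))).Finite := Fst.finite_toSet.infClosure
  have h𝒞 : infClosure (Fst : Set (Set 𝒳)) ⊆ {A | A ∈ I.sets ∧ A ⊆ B₁} :=
    infClosure_min hFst (I.infClosed_sets_subset B₁)
  obtain ⟨M, E, hEmono, hEmem, hdet⟩ := hP.exists_chain_determining hfin.toFinset
    (fun C hC => I.measurableSet (h𝒞 (hfin.mem_toFinset.1 hC)).1)
    (by simp [infClosed_infClosure])
  obtain ⟨m, hVm, hEm⟩ := hP.exists_indep_Vr_of_isNTR hntr hB₁ hB₂ hB hEmono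
    (fun i => finUnions_mono (fun C hC => (h𝒞 (by simpa using hC)).1) (hEmem i))
    fun i => (subset_sUnion_of_mem_finUnions (hEmem i)).trans
      (sUnion_subset fun C hC => (h𝒞 (by simpa using hC)).2)
  exact hVm.biSup_comap_of_aestronglyMeasurable Fst fun A hA =>
    hdet m hEm A (hfin.mem_toFinset.2 (subset_infClosure hA))

theorem IsRPM.isNTR_of_indep_Vr_sigmaF [IsProbabilityMeasure Pr] (hP : IsRPM Pr P)
    (h : ∀ B₁ B₂, B₁ ∈ finUnions I.sets → B₂ ∈ finUnions I.sets → B₁ ⊆ B₂ →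
      Indep (MeasurableSpace.comap (Vr P B₁ B₂) inferInstance) (sigmaF I P B₁) Pr) :
    IsNTR I Pr P := by
  intro k B hBmem hBmono
  have hF : Monotone fun i => sigmaF I P (B i) := fun i j hij => sigmaF_mono (hBmono i j hij)
  exact iIndepFun_of_indep_succ hF
    (aestronglyMeasurable_ntrVars hF fun i => hP.aestronglyMeasurable_sigmaF (hBmem i))
    fun j => h _ _ (hBmem _) (hBmem _) (hBmono _ _ (Fin.castSucc_le_succ j))

end NeutralToTheRight

/-- A random probability measure is neutral to the right iff for every
`B₁ ⊆ B₂` in `𝒜(u)`, `V_{B₁B₂}` is independent of `ℱ_{B₁}`. -/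
theorem stmt6 (I : IndexingCollection 𝒳) (Pr : Measure Ω) [IsProbabilityMeasure Pr]
    (P : Set 𝒳 → Ω → ℝ) (hP : IsRPM Pr P) :
    IsNTR I Pr P ↔
      ∀ B₁ B₂, B₁ ∈ finUnions I.sets → B₂ ∈ finUnions I.sets → B₁ ⊆ B₂ →
        Indep (MeasurableSpace.comap (Vr P B₁ B₂) inferInstance) (sigmaF I P B₁) Pr :=
  ⟨fun hntr _ _ hB₁ hB₂ hB => hP.indep_Vr_sigmaF_of_isNTR hntr hB₁ hB₂ hB,
    hP.isNTR_of_indep_Vr_sigmaF⟩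
end

section
/- For each pair B₁⊆B₂ in 𝒜(u) let F_{B₁B₂} be a probability measure on [0,1], and define the kernels Q_{B₁B₂}(z₁;Γ₂):=F_{B₁B₂}((Γ₂−z₁)/(1−z₁)) for z₁<1 and Q_{B₁B₂}(1;·):=δ₁. Then (F_{B₁B₂})_{B₁⊆B₂} is a neutral to the right system (i.e. for all B₁⊆B₂⊆B₃ in 𝒜(u) and Borel Γ⊆[0,1], F_{B₁B₃}(Γ)=∫_{[0,1]²} 1_Γ(y+z−yz) F_{B₂B₃}(dz) F_{B₁B₂}(dy)) if and only if (Q_{B₁B₂})_{B₁⊆B₂} is a transition system (i.e. it satisfies the Chapman–Kolmogorov equations Q_{B₁B₃}(z₁;Γ₃)=∫_{[0,1]} Q_{B₂B₃}(z₂;Γ₃) Q_{B₁B₂}(z₁;dz₂) for all B₁⊆B₂⊆B₃ in 𝒜(u), z₁∈[0,1] and Borel Γ₃⊆[0,1]). -/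
open MeasureTheory ProbabilityTheory Set
open scoped ENNReal Classical BigOperators

variable {𝒳 Ω : Type*} [TopologicalSpace 𝒳] [MeasurableSpace 𝒳] [BorelSpace 𝒳]
  [MeasurableSpace Ω]

/-!
Write `y ⊕ z = y + z - y z = 1 - (1 - y)(1 - z)` (`probSum`). Since `z ⊕ ·` inverts
`t ↦ (t - z)/(1 - z)` and `1 ⊕ t = 1`, the kernel `Q_{B₁B₂}(z, ·)` is, for every `z ∈ [0,1]`, the law
of `z ⊕ T` with `T ∼ F_{B₁B₂}`; and the neutral-to-the-right identity says that `F_{B₁B₃}` is the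
law of `Y ⊕ Z` for independent `Y ∼ F_{B₁B₂}`, `Z ∼ F_{B₂B₃}`. Chapman–Kolmogorov at `z₁ = 0` is
exactly this identity, and conversely, `⊕` being associative, the identity applied to
`(z₁ ⊕ ·)⁻¹' Γ` is Chapman–Kolmogorov at `z₁`.
-/

def probSum (y z : ℝ) : ℝ := y + z - y * z

lemma probSum_comp (x y : ℝ) : probSum x ∘ probSum y = probSum (probSum x y) := by
  funext z; simp only [Function.comp, probSum]; ring

lemma probSum_zero_left : probSum 0 = id := by
  funext t; simp [probSum]

lemma probSum_one_left : probSum 1 = fun _ => 1 := by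
  funext t; unfold probSum; ring

@[fun_prop]
lemma measurable_probSum (z : ℝ) : Measurable (probSum z) := by
  unfold probSum; fun_prop

lemma probSum_mem_Icc {y z : ℝ} (hy : y ∈ Icc (0:ℝ) 1) (hz : z ∈ Icc (0:ℝ) 1) :
    probSum y z ∈ Icc (0:ℝ) 1 := by
  obtain ⟨hy0, hy1⟩ := hy
  obtain ⟨hz0, hz1⟩ := hz
  unfold probSum
  constructor <;> nlinarith

lemma image_div_one_sub_eq_preimage_probSum {z : ℝ} (hz : z ≠ 1) (Γ : Set ℝ) :
    (fun t => (t - z) / (1 - z)) '' Γ = probSum z ⁻¹' Γ := by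
  have hz' : 1 - z ≠ 0 := sub_ne_zero.2 hz.symm
  ext s
  constructor
  · rintro ⟨t, ht, rfl⟩
    rw [Set.mem_preimage]
    convert ht using 1
    unfold probSum; field_simp; ring
  · intro hs
    refine ⟨probSum z s, hs, ?_⟩
    unfold probSum; field_simp; ring

lemma ae_mem_Icc_map_probSum {μ : Measure ℝ} (hμ : ∀ᵐ t ∂μ, t ∈ Icc (0:ℝ) 1) {z : ℝ}
    (hz : z ∈ Icc (0:ℝ) 1) : ∀ᵐ t ∂μ.map (probSum z), t ∈ Icc (0:ℝ) 1 :=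
  (ae_map_iff (measurable_probSum z).aemeasurable measurableSet_Icc).2
    (hμ.mono fun _ ht => probSum_mem_Icc hz ht)

lemma map_probSum_Icc_eq_one {μ : Measure ℝ} [IsProbabilityMeasure μ]
    (hμ : ∀ᵐ t ∂μ, t ∈ Icc (0:ℝ) 1) {z : ℝ} (hz : z ∈ Icc (0:ℝ) 1) :
    μ.map (probSum z) (Icc (0:ℝ) 1) = 1 := by
  have := Measure.isProbabilityMeasure_map (μ := μ) (measurable_probSum z).aemeasurable
  exact (mem_ae_iff_prob_eq_one measurableSet_Icc).1 (ae_mem_Icc_map_probSum hμ hz)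

lemma kernel_eq_map_probSum {F : Measure ℝ} [IsProbabilityMeasure F] {Q : Kernel ℝ ℝ}
    (hF : ∀ᵐ t ∂F, t ∈ Icc (0:ℝ) 1)
    (hQ : ∀ z : ℝ, 0 ≤ z → z < 1 → ∀ Γ : Set ℝ, MeasurableSet Γ →
      Q z Γ = F (((fun t => (t - z) / (1 - z)) '' Γ) ∩ Icc 0 1))
    (hQ₁ : Q 1 = Measure.dirac 1) {z : ℝ} (hz : z ∈ Icc (0:ℝ) 1) :
    Q z = F.map (probSum z) := by
  rcases hz.2.lt_or_eq with hz₁ | rfl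
  · ext Γ hΓ
    rw [hQ z hz.1 hz₁ Γ hΓ, image_div_one_sub_eq_preimage_probSum hz₁.ne,
      Measure.map_apply (measurable_probSum z) hΓ]
    exact measure_inter_conull hF
  · rw [hQ₁, probSum_one_left, Measure.map_const, measure_univ, one_smul]

lemma lintegral_indicator_probSum {F G : Measure ℝ} (hF : ∀ᵐ t ∂F, t ∈ Icc (0:ℝ) 1)
    (hG : ∀ᵐ t ∂G, t ∈ Icc (0:ℝ) 1) {Γ : Set ℝ} (hΓ : MeasurableSet Γ) :
    ∫⁻ y in Icc (0:ℝ) 1, ∫⁻ z in Icc (0:ℝ) 1, Γ.indicator (fun _ => (1:ℝ≥0∞)) (y + z - y * z) ∂G ∂F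
      = ∫⁻ y, G (probSum y ⁻¹' Γ) ∂F := by
  rw [Measure.restrict_eq_self_of_ae_mem hF, Measure.restrict_eq_self_of_ae_mem hG]
  refine lintegral_congr fun y => ?_
  rw [← one_mul (G _), ← lintegral_indicator_const (measurable_probSum y hΓ)]
  rfl

lemma setLIntegral_kernel_map_probSum {F G : Measure ℝ} (hF : ∀ᵐ t ∂F, t ∈ Icc (0:ℝ) 1)
    {Q : Kernel ℝ ℝ} (hQ : ∀ z ∈ Icc (0:ℝ) 1, Q z = G.map (probSum z))
    {z₁ : ℝ} (hz₁ : z₁ ∈ Icc (0:ℝ) 1) {Γ : Set ℝ} (hΓ : MeasurableSet Γ) :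
    ∫⁻ z₂ in Icc (0:ℝ) 1, Q z₂ Γ ∂F.map (probSum z₁)
      = ∫⁻ y, G (probSum (probSum z₁ y) ⁻¹' Γ) ∂F := by
  rw [Measure.restrict_eq_self_of_ae_mem (ae_mem_Icc_map_probSum hF hz₁),
    lintegral_map (Q.measurable_coe hΓ) (measurable_probSum z₁)]
  refine lintegral_congr_ae (hF.mono fun y hy => ?_)
  dsimp only
  rw [hQ _ (probSum_mem_Icc hz₁ hy), Measure.map_apply (measurable_probSum _) hΓ]

theorem ntr_identity_iff_chapmanKolmogorov {F₁₂ F₂₃ F₁₃ : Measure ℝ} {Q₁₂ Q₂₃ Q₁₃ : Kernel ℝ ℝ}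
    (hF₁₂ : ∀ᵐ t ∂F₁₂, t ∈ Icc (0:ℝ) 1) (hF₂₃ : ∀ᵐ t ∂F₂₃, t ∈ Icc (0:ℝ) 1)
    (hQ₁₂ : ∀ z ∈ Icc (0:ℝ) 1, Q₁₂ z = F₁₂.map (probSum z))
    (hQ₂₃ : ∀ z ∈ Icc (0:ℝ) 1, Q₂₃ z = F₂₃.map (probSum z))
    (hQ₁₃ : ∀ z ∈ Icc (0:ℝ) 1, Q₁₃ z = F₁₃.map (probSum z)) :
    (∀ Γ : Set ℝ, MeasurableSet Γ → F₁₃ Γ = ∫⁻ y in Icc (0:ℝ) 1, ∫⁻ z in Icc (0:ℝ) 1,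
        Γ.indicator (fun _ => (1:ℝ≥0∞)) (y + z - y * z) ∂F₂₃ ∂F₁₂) ↔
      ∀ z₁ ∈ Icc (0:ℝ) 1, ∀ Γ : Set ℝ, MeasurableSet Γ →
        Q₁₃ z₁ Γ = ∫⁻ z₂ in Icc (0:ℝ) 1, Q₂₃ z₂ Γ ∂(Q₁₂ z₁) := by
  constructor
  · intro hntr z₁ hz₁ Γ hΓ
    have hΓ' : MeasurableSet (probSum z₁ ⁻¹' Γ) := measurable_probSum z₁ hΓ
    rw [hQ₁₃ z₁ hz₁, hQ₁₂ z₁ hz₁, Measure.map_apply (measurable_probSum z₁) hΓ, hntr _ hΓ',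
      lintegral_indicator_probSum hF₁₂ hF₂₃ hΓ', setLIntegral_kernel_map_probSum hF₁₂ hQ₂₃ hz₁ hΓ]
    simp only [← Set.preimage_comp, probSum_comp]
  · intro hck Γ hΓ
    have h0 : (0:ℝ) ∈ Icc (0:ℝ) 1 := ⟨le_rfl, zero_le_one⟩
    have hck₀ := hck 0 h0 Γ hΓ
    rw [hQ₁₃ 0 h0, hQ₁₂ 0 h0, setLIntegral_kernel_map_probSum hF₁₂ hQ₂₃ h0 hΓ,
      probSum_zero_left, Measure.map_id] at hck₀
    rw [lintegral_indicator_probSum hF₁₂ hF₂₃ hΓ]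
    simpa only [id] using hck₀

theorem stmt8_general (I : IndexingCollection 𝒳)
    (F : Set 𝒳 → Set 𝒳 → Measure ℝ)
    (hFprob : ∀ B₁ B₂, IsProbabilityMeasure (F B₁ B₂))
    (hFsupp : ∀ B₁ B₂, F B₁ B₂ (Set.Icc (0:ℝ) 1) = 1)
    (Q : Set 𝒳 → Set 𝒳 → Kernel ℝ ℝ)
    (hQ : ∀ B₁ B₂, B₁ ∈ finUnions I.sets → B₂ ∈ finUnions I.sets → B₁ ⊆ B₂ →
      (∀ z₁ : ℝ, 0 ≤ z₁ → z₁ < 1 → ∀ Γ : Set ℝ, MeasurableSet Γ →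
        Q B₁ B₂ z₁ Γ = F B₁ B₂ (((fun t => (t - z₁) / (1 - z₁)) '' Γ) ∩ Set.Icc 0 1)) ∧
      Q B₁ B₂ 1 = Measure.dirac 1) :
    IsNTRSystem I F ↔ IsTransitionSystem I Q := by
  have hF : ∀ B₁ B₂, ∀ᵐ t ∂F B₁ B₂, t ∈ Icc (0:ℝ) 1 := fun B₁ B₂ =>
    (mem_ae_iff_prob_eq_one measurableSet_Icc).2 (hFsupp B₁ B₂)
  have hQF : ∀ B₁ B₂, B₁ ∈ finUnions I.sets → B₂ ∈ finUnions I.sets → B₁ ⊆ B₂ →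
      ∀ z ∈ Icc (0:ℝ) 1, Q B₁ B₂ z = (F B₁ B₂).map (probSum z) := fun B₁ B₂ h₁ h₂ h₁₂ _ hz =>
    kernel_eq_map_probSum (hF B₁ B₂) (hQ B₁ B₂ h₁ h₂ h₁₂).1 (hQ B₁ B₂ h₁ h₂ h₁₂).2 hz
  have hchain : ∀ B₁ B₂ B₃, B₁ ∈ finUnions I.sets → B₂ ∈ finUnions I.sets →
      B₃ ∈ finUnions I.sets → B₁ ⊆ B₂ → B₂ ⊆ B₃ → _ := fun B₁ B₂ B₃ h₁ h₂ h₃ h₁₂ h₂₃ =>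
    ntr_identity_iff_chapmanKolmogorov (hF B₁ B₂) (hF B₂ B₃) (hQF B₁ B₂ h₁ h₂ h₁₂)
      (hQF B₂ B₃ h₂ h₃ h₂₃) (hQF B₁ B₃ h₁ h₃ (h₁₂.trans h₂₃))
  constructor
  · intro hN
    refine ⟨fun B₁ B₂ h₁ h₂ h₁₂ z hz => ?_, fun B₁ B₂ B₃ h₁ h₂ h₃ h₁₂ h₂₃ =>
      (hchain B₁ B₂ B₃ h₁ h₂ h₃ h₁₂ h₂₃).1 (hN B₁ B₂ B₃ h₁ h₂ h₃ h₁₂ h₂₃)⟩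
    rw [hQF B₁ B₂ h₁ h₂ h₁₂ z hz]
    exact map_probSum_Icc_eq_one (hF B₁ B₂) hz
  · intro hT B₁ B₂ B₃ h₁ h₂ h₃ h₁₂ h₂₃
    exact (hchain B₁ B₂ B₃ h₁ h₂ h₃ h₁₂ h₂₃).2 (hT.2 B₁ B₂ B₃ h₁ h₂ h₃ h₁₂ h₂₃)

/-- With `Q_{B₁B₂}(z₁;·) = F_{B₁B₂}((· - z₁)/(1 - z₁))` for `z₁ < 1` and
`Q_{B₁B₂}(1;·) = δ₁`, the family `(F_{B₁B₂})` is a neutral to the right system iff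
`(Q_{B₁B₂})` is a transition system. -/
theorem stmt8 (I : IndexingCollection 𝒳)
    (F : Set 𝒳 → Set 𝒳 → Measure ℝ)
    (hFprob : ∀ B₁ B₂, IsProbabilityMeasure (F B₁ B₂))
    (hFsupp : ∀ B₁ B₂, F B₁ B₂ (Set.Icc (0:ℝ) 1) = 1)
    (Q : Set 𝒳 → Set 𝒳 → Kernel ℝ ℝ) [∀ B₁ B₂, IsMarkovKernel (Q B₁ B₂)]
    (hQ : ∀ B₁ B₂, B₁ ∈ finUnions I.sets → B₂ ∈ finUnions I.sets → B₁ ⊆ B₂ →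
      (∀ z₁ : ℝ, 0 ≤ z₁ → z₁ < 1 → ∀ Γ : Set ℝ, MeasurableSet Γ →
        Q B₁ B₂ z₁ Γ = F B₁ B₂ (((fun t => (t - z₁) / (1 - z₁)) '' Γ) ∩ Set.Icc 0 1)) ∧
      Q B₁ B₂ 1 = Measure.dirac 1) :
    IsNTRSystem I F ↔ IsTransitionSystem I Q :=
  stmt8_general I F hFprob hFsupp Q hQ
end

section
/- Let (Y₁,…,Y_k) have a completely neutral distribution on the simplex, set Y_{k+1}:=1−∑_{j=1}^k Y_j, and let X be a random variable with values in {1,…,k+1} such that 𝒫[X=j | Y₁,…,Y_{k+1}] = Y_j a.s. for every j=1,…,k+1. Then for every j with 𝒫(X=j)>0, the conditional distribution of (Y₁,…,Y_k) given X=j is completely neutral. -/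
open MeasureTheory ProbabilityTheory
open scoped ENNReal BigOperators

/-- A random vector `(Y₁,…,Y_k)` with values in the simplex has a completely neutral
distribution if there exist independent `[0,1]`-valued random variables `V₁,…,V_k` such that
`(Y₁,…,Y_k)` has the same distribution as `(V₁, V₂(1-V₁), …, V_k ∏_{j<k}(1-V_j))`; equivalently
there exist laws `ν₁,…,ν_k` on `[0,1]` such that the law of `(Y₁,…,Y_k)` is the image of
`ν₁ ⊗ … ⊗ ν_k` under `v ↦ (v_j ∏_{i<j}(1-v_i))_j`. -/
def IsCompletelyNeutral {Ω : Type*} [MeasurableSpace Ω] (Pr : Measure Ω)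
    {k : ℕ} (Y : Fin k → Ω → ℝ) : Prop :=
  ∃ ν : Fin k → Measure ℝ, (∀ j, IsProbabilityMeasure (ν j)) ∧
    (∀ j, ν j (Set.Icc (0:ℝ) 1) = 1) ∧
    Measure.map (fun ω (j : Fin k) => Y j ω) Pr
      = Measure.map (fun (v : Fin k → ℝ) (j : Fin k) => v j * ∏ i ∈ Finset.Iio j, (1 - v i))
          (Measure.pi ν)

/-! Let `T` be the stick-breaking map, so that the law of `Y` is `T_*(ν₁ ⊗ ⋯ ⊗ ν_k)`. The
hypothesis on `X` says that on `{X = j}` the law of `Y` acquires the density `y ↦ y_j`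
(resp. `y ↦ 1 - ∑ y`). Pulled back along `T`, this density is `v_j ∏_{i<j} (1 - v_i)`
(resp. `∏_i (1 - v_i)`): a product of functions of the separate coordinates. Hence the
conditional law of `Y` is the image under `T` of the product of the reweighted, normalised
measures `νᵢ`. -/

def stickBreaking {k : ℕ} (v : Fin k → ℝ) (j : Fin k) : ℝ :=
  v j * ∏ i ∈ Finset.Iio j, (1 - v i)

lemma measurable_stickBreaking {k : ℕ} : Measurable (stickBreaking (k := k)) :=
  measurable_pi_lambda _ fun j => (measurable_pi_apply j).mul
    (Finset.measurable_prod _ fun i _ => measurable_const.sub (measurable_pi_apply i))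

lemma stickBreaking_castSucc {k : ℕ} (v : Fin (k + 1) → ℝ) (j : Fin k) :
    stickBreaking v j.castSucc = stickBreaking (fun i => v i.castSucc) j := by
  simp [stickBreaking, ← Fin.map_castSuccEmb_Iio]

lemma sum_stickBreaking {k : ℕ} (v : Fin k → ℝ) :
    ∑ j, stickBreaking v j = 1 - ∏ i, (1 - v i) := by
  induction k with
  | zero => simp
  | succ k ih =>
    have hlast : Finset.Iio (Fin.last k) = Finset.univ.map Fin.castSuccEmb := by
      ext i; simp
    rw [Fin.sum_univ_castSucc, Fin.prod_univ_castSucc]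
    simp only [stickBreaking_castSucc, ih]
    simp only [stickBreaking, hlast, Finset.prod_map, Fin.coe_castSuccEmb]
    ring

lemma stickBreaking_eq_prod {k : ℕ} (v : Fin k → ℝ) (j : Fin k) :
    stickBreaking v j = ∏ i, if i < j then 1 - v i else if i = j then v i else 1 := by
  rw [Finset.prod_ite, Finset.prod_ite_eq']
  simp [stickBreaking, Finset.filter_gt_eq_Iio, mul_comm]

namespace MeasureTheory.Measure

variable {α β : Type*} [MeasurableSpace α] [MeasurableSpace β]

lemma map_withDensity_comp {μ : Measure α} {f : α → β} (hf : Measurable f) {h : β → ℝ≥0∞}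
    (hh : Measurable h) : (μ.withDensity (h ∘ f)).map f = (μ.map f).withDensity h := by
  ext s hs
  rw [map_apply hf hs, withDensity_apply _ (hf hs), withDensity_apply _ hs,
    setLIntegral_map hs hh hf, Function.comp_def]

variable {ι : Type*} [Fintype ι] {X : ι → Type*} [∀ i, MeasurableSpace (X i)]

lemma pi_withDensity (μ : ∀ i, Measure (X i)) [∀ i, IsProbabilityMeasure (μ i)]
    {g : ∀ i, X i → ℝ≥0∞} (hg : ∀ i, Measurable (g i))
    [∀ i, SigmaFinite ((μ i).withDensity (g i))] :
    Measure.pi (fun i => (μ i).withDensity (g i))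
      = (Measure.pi μ).withDensity fun x => ∏ i, g i (x i) := by
  refine pi_eq fun s hs => ?_
  have hind : (Set.univ.pi s).indicator (fun x => ∏ i, g i (x i))
      = fun x => ∏ i, (s i).indicator (g i) (x i) := by
    ext x
    by_cases hx : ∀ i, x i ∈ s i <;> simp [Set.indicator, Fintype.prod_ite_zero, hx]
  rw [withDensity_apply _ (MeasurableSet.univ_pi hs), ← lintegral_indicator (.univ_pi hs), hind,
    lintegral_prod_eq_prod_lintegral_of_indepFun _ _
      (iIndepFun_pi fun i => ((hg i).indicator (hs i)).aemeasurable)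
      fun i => ((hg i).indicator (hs i)).comp (measurable_pi_apply i)]
  refine Finset.prod_congr rfl fun i _ => ?_
  rw [withDensity_apply _ (hs i), ← lintegral_indicator (hs i),
    (measurePreserving_eval μ i).lintegral_comp ((hg i).indicator (hs i))]

lemma pi_cond_univ (μ : ∀ i, Measure (X i)) [∀ i, IsFiniteMeasure (μ i)] :
    Measure.pi (fun i => (μ i)[|Set.univ]) = (Measure.pi μ)[|Set.univ] := by
  refine pi_eq fun s hs => ?_
  simp only [cond_apply MeasurableSet.univ, Set.univ_inter, pi_pi, pi_univ]
  rw [ENNReal.prod_inv_distrib fun i _ j _ _ => Or.inr (measure_ne_top _ _),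
    Finset.prod_mul_distrib]

end MeasureTheory.Measure

namespace ProbabilityTheory

variable {α β : Type*} [MeasurableSpace α] [MeasurableSpace β]

lemma map_cond_univ {μ : Measure α} {f : α → β} (hf : Measurable f) :
    (μ[|Set.univ]).map f = (μ.map f)[|Set.univ] := by
  simp [cond, Measure.map_smul, Measure.map_apply hf MeasurableSet.univ]

lemma map_restrict_eq_withDensity_of_condExp {μ : Measure α} [IsFiniteMeasure μ]
    {Z : α → β} (hZ : Measurable Z) {A : Set α} (hA : MeasurableSet A)
    {f : β → ℝ} (hf : Measurable f)
    (hcond : μ[A.indicator (fun _ => (1:ℝ)) | MeasurableSpace.comap Z inferInstance]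
      =ᵐ[μ] fun ω => f (Z ω)) :
    (μ.restrict A).map Z = (μ.map Z).withDensity fun y => ENNReal.ofReal (f y) := by
  have hint : Integrable (fun ω => f (Z ω)) μ := integrable_condExp.congr hcond
  have hnonneg : 0 ≤ᵐ[μ] fun ω => f (Z ω) := by
    filter_upwards [condExp_nonneg (m := MeasurableSpace.comap Z inferInstance)
      (Filter.Eventually.of_forall fun ω => Set.indicator_nonneg (fun _ _ => zero_le_one) ω :
        0 ≤ᵐ[μ] A.indicator fun _ => (1:ℝ)), hcond] with ω h1 h2 using h2 ▸ h1
  ext s hs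
  rw [Measure.map_apply hZ hs, Measure.restrict_apply (hZ hs), withDensity_apply _ hs,
    setLIntegral_map hs hf.ennreal_ofReal hZ,
    ← ofReal_integral_eq_lintegral_ofReal hint.restrict (ae_restrict_of_ae hnonneg)]
  have hset : ∫ ω in Z ⁻¹' s, f (Z ω) ∂μ
      = ∫ ω in Z ⁻¹' s, A.indicator (fun _ => (1:ℝ)) ω ∂μ := by
    rw [← setIntegral_condExp (f := A.indicator fun _ => (1:ℝ)) hZ.comap_le
      ((integrable_const 1).indicator hA) ⟨s, hs, rfl⟩]
    exact setIntegral_congr_ae (hZ hs) (hcond.mono fun ω h _ => h.symm)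
  rw [hset, integral_indicator hA, setIntegral_const, smul_eq_mul, mul_one,
    measureReal_def, Measure.restrict_apply hA, ENNReal.ofReal_toReal (measure_ne_top _ _),
    Set.inter_comm]

end ProbabilityTheory

lemma isCompletelyNeutral_cond_of_map_restrict {Ω : Type*} [MeasurableSpace Ω] {μ : Measure Ω}
    {k : ℕ} {Y : Fin k → Ω → ℝ} (hY : ∀ j, Measurable (Y j)) {A : Set Ω} (hA0 : μ A ≠ 0)
    {ρ : Fin k → Measure ℝ} [∀ i, IsFiniteMeasure (ρ i)]
    (hρ : ∀ i, ρ i (Set.Icc (0:ℝ) 1)ᶜ = 0)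
    (hlaw : (μ.restrict A).map (fun ω j => Y j ω) = (Measure.pi ρ).map stickBreaking) :
    IsCompletelyNeutral (μ[|A]) Y := by
  have hYv : Measurable fun ω j => Y j ω := measurable_pi_lambda _ hY
  have hρ0 : ∀ i, ρ i Set.univ ≠ 0 := by
    intro i hi
    apply hA0
    have := congrArg (fun m : Measure (Fin k → ℝ) => m Set.univ) hlaw
    simp only [Measure.map_apply hYv MeasurableSet.univ,
      Measure.map_apply measurable_stickBreaking MeasurableSet.univ, Set.preimage_univ,
      Measure.restrict_apply_univ, Measure.pi_univ] at this
    rw [this, Finset.prod_eq_zero (Finset.mem_univ i) hi]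
  refine ⟨fun i => (ρ i)[|Set.univ], fun i => cond_isProbabilityMeasure (hρ0 i), fun i => ?_, ?_⟩
  · have := cond_isProbabilityMeasure (hρ0 i)
    exact (prob_compl_eq_zero_iff measurableSet_Icc).mp (cond_absolutelyContinuous (hρ i))
  · calc (μ[|A]).map (fun ω j => Y j ω)
        = ((μ.restrict A)[|Set.univ]).map (fun ω j => Y j ω) := by
          simp only [ProbabilityTheory.cond, Measure.restrict_univ, Measure.restrict_apply_univ]
    _ = ((Measure.pi ρ).map stickBreaking)[|Set.univ] := by rw [map_cond_univ hYv, hlaw]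
    _ = (Measure.pi fun i => (ρ i)[|Set.univ]).map stickBreaking := by
      rw [Measure.pi_cond_univ, map_cond_univ measurable_stickBreaking]

theorem IsCompletelyNeutral.cond {Ω : Type*} [MeasurableSpace Ω] {μ : Measure Ω}
    [IsFiniteMeasure μ] {k : ℕ} {Y : Fin k → Ω → ℝ} (hY : ∀ j, Measurable (Y j))
    (hCN : IsCompletelyNeutral μ Y) {A : Set Ω} (hA : MeasurableSet A) (hA0 : μ A ≠ 0)
    {f : (Fin k → ℝ) → ℝ} (hf : Measurable f)
    (hcond : μ[A.indicator (fun _ => (1:ℝ)) |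
        MeasurableSpace.comap (fun ω j => Y j ω) inferInstance]
      =ᵐ[μ] fun ω => f (fun j => Y j ω))
    {g : Fin k → ℝ → ℝ} (hg : ∀ i, Measurable (g i))
    (hg_mem : ∀ i, ∀ x ∈ Set.Icc (0:ℝ) 1, g i x ∈ Set.Icc (0:ℝ) 1)
    (hfg : ∀ v, f (stickBreaking v) = ∏ i, g i (v i)) :
    IsCompletelyNeutral (μ[|A]) Y := by
  obtain ⟨ν, hνprob, hνIcc, hlaw⟩ := hCN
  change _ = Measure.map stickBreaking _ at hlaw
  have hν : ∀ i, ∀ᵐ x ∂ν i, x ∈ Set.Icc (0:ℝ) 1 := fun i =>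
    mem_ae_iff.mpr ((prob_compl_eq_zero_iff measurableSet_Icc).mpr (hνIcc i))
  set ρ : Fin k → Measure ℝ := fun i => (ν i).withDensity fun x => ENNReal.ofReal (g i x)
  have hρfin : ∀ i, IsFiniteMeasure (ρ i) := fun i =>
    isFiniteMeasure_withDensity_ofReal <| HasFiniteIntegral.of_bounded (C := 1) <| by
      filter_upwards [hν i] with x hx
      rw [Real.norm_eq_abs, abs_le]
      constructor <;> linarith [(hg_mem i x hx).1, (hg_mem i x hx).2]
  have hcube : ∀ᵐ v ∂Measure.pi ν, ∀ i, v i ∈ Set.Icc (0:ℝ) 1 :=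
    Measure.ae_pi_le_pi (Filter.eventually_pi hν)
  refine isCompletelyNeutral_cond_of_map_restrict (ρ := ρ) hY hA0
    (fun i => withDensity_absolutelyContinuous _ _ (mem_ae_iff.mp (hν i))) ?_
  rw [map_restrict_eq_withDensity_of_condExp (measurable_pi_lambda _ hY) hA hf hcond, hlaw,
    ← Measure.map_withDensity_comp measurable_stickBreaking hf.ennreal_ofReal,
    Measure.pi_withDensity _ fun i => (hg i).ennreal_ofReal]
  congr 1
  refine withDensity_congr_ae ?_
  filter_upwards [hcube] with v hv
  rw [Function.comp_apply, hfg v, ENNReal.ofReal_prod_of_nonneg fun i _ => (hg_mem i _ (hv i)).1]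

theorem stmt19_general {Ω : Type*} [MeasurableSpace Ω] (Pr : Measure Ω) [IsProbabilityMeasure Pr]
    (k : ℕ) (Y : Fin k → Ω → ℝ) (hYmeas : ∀ j, Measurable (Y j))
    (hCN : IsCompletelyNeutral Pr Y)
    (X : Ω → ℕ) (hX : Measurable X)
    (hXcond : ∀ j : Fin k,
      Pr[Set.indicator {ω | X ω = j.val + 1} (fun _ => (1:ℝ)) |
          MeasurableSpace.comap (fun ω (j : Fin k) => Y j ω) inferInstance]
        =ᵐ[Pr] Y j)
    (hXcondLast :
      Pr[Set.indicator {ω | X ω = k + 1} (fun _ => (1:ℝ)) |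
          MeasurableSpace.comap (fun ω (j : Fin k) => Y j ω) inferInstance]
        =ᵐ[Pr] fun ω => 1 - ∑ j, Y j ω) :
    ∀ j, 1 ≤ j → j ≤ k + 1 → 0 < Pr {ω | X ω = j} →
      IsCompletelyNeutral (Pr[|{ω | X ω = j}]) Y := by
  intro j hj1 hj hpos
  have hA : MeasurableSet {ω | X ω = j} := hX (measurableSet_singleton j)
  rcases (show j ≤ k ∨ j = k + 1 by omega) with hjk | rfl
  · obtain ⟨i, rfl⟩ : ∃ i : Fin k, j = i.val + 1 := ⟨⟨j - 1, by omega⟩, by simp; omega⟩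
    refine hCN.cond hYmeas hA hpos.ne' (measurable_pi_apply i) (hXcond i)
      (g := fun l x => if l < i then 1 - x else if l = i then x else 1)
      (fun l => by split_ifs <;> fun_prop) (fun l x hx => ?_) (stickBreaking_eq_prod · i)
    split_ifs <;> constructor <;> linarith [hx.1, hx.2]
  · refine hCN.cond hYmeas hA hpos.ne' (f := fun y => 1 - ∑ l, y l) (by fun_prop) hXcondLast
      (g := fun _ x => 1 - x)
      (fun _ => by fun_prop) (fun _ x hx => ⟨by linarith [hx.2], by linarith [hx.1]⟩)
      fun v => ?_
    rw [sum_stickBreaking]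
    ring

/-- Corollary B.2. If `(Y₁,…,Y_k)` is completely neutral,
`Y_{k+1} := 1 - ∑_j Y_j`, and `X` satisfies `𝒫[X = j | Y₁,…,Y_{k+1}] = Y_j` for
`j = 1,…,k+1`, then the conditional distribution of `(Y₁,…,Y_k)` given `X = j` is
completely neutral. -/
theorem stmt19 {Ω : Type*} [MeasurableSpace Ω] (Pr : Measure Ω) [IsProbabilityMeasure Pr]
    (k : ℕ) (Y : Fin k → Ω → ℝ) (hYmeas : ∀ j, Measurable (Y j))
    (hsimplex : ∀ᵐ ω ∂Pr, (∀ j, Y j ω ∈ Set.Icc (0:ℝ) 1) ∧ ∑ j, Y j ω ≤ 1)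
    (hCN : IsCompletelyNeutral Pr Y)
    (X : Ω → ℕ) (hX : Measurable X) (hXrange : ∀ ω, 1 ≤ X ω ∧ X ω ≤ k+1)
    (hXcond : ∀ j : Fin k,
      Pr[Set.indicator {ω | X ω = j.val + 1} (fun _ => (1:ℝ)) |
          MeasurableSpace.comap (fun ω (j : Fin k) => Y j ω) inferInstance]
        =ᵐ[Pr] Y j)
    (hXcondLast :
      Pr[Set.indicator {ω | X ω = k + 1} (fun _ => (1:ℝ)) |
          MeasurableSpace.comap (fun ω (j : Fin k) => Y j ω) inferInstance]
        =ᵐ[Pr] fun ω => 1 - ∑ j, Y j ω) :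
    ∀ j, 1 ≤ j → j ≤ k + 1 → 0 < Pr {ω | X ω = j} →
      IsCompletelyNeutral (Pr[|{ω | X ω = j}]) Y :=
  stmt19_general Pr k Y hYmeas hCN X hX hXcond hXcondLast
end
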